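/- Let d ≥ 7 be an integer. There exists a constant C = C(d) > 0 such that for all v, w ∈ ℤ^d: the function x ↦ ⟨v−x⟩^(4−d) · ⟨x−w⟩^(2−d) is summable over ℤ^d and ∑'_{x ∈ ℤ^d} ⟨v−x⟩^(4−d) · ⟨x−w⟩^(2−d) ≤ C · ⟨v−w⟩^(6−d). -/

import Mathlib

/-!
Replace `⟨·⟩` by the comparable sup-norm bracket `supNat + 1`: sums over `ℤ^d` of functions of
`supNat (x - c)` become one-dimensional sums with the shell weight `(m + 1)^(d - 1)`. With
`n = supNat (v - w)`, split `ℤ^d` into the points within `n / 2` of `w` (where `⟨v - x⟩ ≳ n`), the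
points within `n / 2` of `v`, and the rest (where `⟨v - x⟩ ≳ ⟨x - w⟩`). For exponents `a, b < d`
the first two regions contribute `n^(-a) · n^(d - b)` and `n^(-b) · n^(d - a)`, and since
`a + b > d` the third is a convergent tail `∑_{m ≥ n/2} m^(d - 1 - a - b) ≲ n^(d - a - b)`.
-/

/-- Euclidean norm of a lattice point of `ℤ^d`. -/
noncomputable def euclNorm {d : ℕ} (x : Fin d → ℤ) : ℝ :=
  Real.sqrt (∑ i, ((x i : ℝ)) ^ 2)

/-- The "Japanese bracket" `⟨x⟩ = ‖x‖ + 1`. -/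
noncomputable def jap {d : ℕ} (x : Fin d → ℤ) : ℝ := euclNorm x + 1

/-- Sup norm of a lattice point of `ℤ^d`. -/
noncomputable def supNorm {d : ℕ} (x : Fin d → ℤ) : ℝ :=
  ((Finset.univ.sup (fun i => (x i).natAbs) : ℕ) : ℝ)

/-- The sup-norm box `B_y(M)` of radius `M` centred at `y`. -/
def latBox {d : ℕ} (y : Fin d → ℤ) (M : ℝ) : Set (Fin d → ℤ) :=
  {x | supNorm (x - y) ≤ M}

/-- The inner vertex boundary `∂B_y(M)` of the box `B_y(M)`. -/
def latBdry {d : ℕ} (y : Fin d → ℤ) (M : ℝ) : Set (Fin d → ℤ) :=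
  {x | x ∈ latBox y M ∧ ∃ x', x' ∉ latBox y M ∧ (∑ i, |x i - x' i|) = 1}

section

open Finset
open scoped ENNReal

variable {d : ℕ}

def supNat (x : Fin d → ℤ) : ℕ := univ.sup fun i => (x i).natAbs

theorem supNat_le_iff {x : Fin d → ℤ} {m : ℕ} : supNat x ≤ m ↔ ∀ i, (x i).natAbs ≤ m := by
  simp [supNat]

theorem natAbs_le_supNat (x : Fin d → ℤ) (i : Fin d) : (x i).natAbs ≤ supNat x :=
  le_sup (f := fun i => (x i).natAbs) (mem_univ i)

theorem supNat_sub_comm (x y : Fin d → ℤ) : supNat (x - y) = supNat (y - x) := by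
  simp only [supNat, Pi.sub_apply, ← Int.natAbs_neg (x _ - y _), neg_sub]

theorem supNat_sub_le (x y z : Fin d → ℤ) : supNat (x - z) ≤ supNat (x - y) + supNat (y - z) :=
  supNat_le_iff.2 fun i => by
    have := natAbs_le_supNat (x - y) i
    have := natAbs_le_supNat (y - z) i
    simp only [Pi.sub_apply] at *
    omega

theorem abs_le_euclNorm (x : Fin d → ℤ) (i : Fin d) : |(x i : ℝ)| ≤ euclNorm x :=
  Real.abs_le_sqrt <| single_le_sum (f := fun j => ((x j : ℝ)) ^ 2) (fun _ _ => sq_nonneg _)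
    (mem_univ i)

theorem supNat_le_euclNorm (x : Fin d → ℤ) : (supNat x : ℝ) ≤ euclNorm x := by
  have h0 : 0 ≤ euclNorm x := Real.sqrt_nonneg _
  rw [← Nat.le_floor_iff h0, supNat_le_iff]
  intro i
  rw [Nat.le_floor_iff h0, Nat.cast_natAbs, Int.cast_abs]
  exact abs_le_euclNorm x i

theorem euclNorm_le_supNat (x : Fin d → ℤ) : euclNorm x ≤ d * supNat x := by
  have hx : ∀ i, ((x i : ℝ)) ^ 2 ≤ (supNat x : ℝ) ^ 2 := fun i => by
    rw [← sq_abs, ← Int.cast_abs, ← Nat.cast_natAbs]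
    exact pow_le_pow_left₀ (by positivity) (by exact_mod_cast natAbs_le_supNat x i) 2
  calc euclNorm x ≤ Real.sqrt (((d : ℝ) * supNat x) ^ 2) := by
        refine Real.sqrt_le_sqrt ((sum_le_sum fun i _ => hx i).trans ?_)
        rw [sum_const, card_univ, Fintype.card_fin, nsmul_eq_mul, mul_pow]
        gcongr
        exact_mod_cast Nat.le_self_pow two_ne_zero d
    _ = d * supNat x := Real.sqrt_sq (by positivity)

theorem jap_pos (x : Fin d → ℤ) : 0 < jap x :=
  add_pos_of_nonneg_of_pos (Real.sqrt_nonneg _) one_pos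

theorem supNat_add_one_le_jap (x : Fin d → ℤ) : (supNat x : ℝ) + 1 ≤ jap x :=
  add_le_add_left (supNat_le_euclNorm x) 1

theorem jap_le_supNat_add_one (hd : 0 < d) (x : Fin d → ℤ) :
    jap x ≤ d * ((supNat x : ℝ) + 1) := by
  have : (1 : ℝ) ≤ d := by exact_mod_cast hd
  unfold jap
  linarith [euclNorm_le_supNat x]

noncomputable def supBall (c : Fin d → ℤ) (m : ℕ) : Finset (Fin d → ℤ) :=
  Fintype.piFinset fun i => Icc (c i - m) (c i + m)

theorem mem_supBall {c x : Fin d → ℤ} {m : ℕ} : x ∈ supBall c m ↔ supNat (x - c) ≤ m := by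
  simp only [supBall, Fintype.mem_piFinset, mem_Icc, supNat_le_iff, Pi.sub_apply]
  exact forall_congr' fun i => by omega

theorem card_supBall (c : Fin d → ℤ) (m : ℕ) : #(supBall c m) = (2 * m + 1) ^ d := by
  have h : ∀ i, #(Icc (c i - m) (c i + m)) = 2 * m + 1 := fun i => by
    rw [Int.card_Icc]; omega
  simp [supBall, Fintype.card_piFinset, h]

theorem card_supBall_succ_sub_le (c : Fin d → ℤ) (k : ℕ) :
    #(supBall c (k + 1)) - #(supBall c k) ≤ d * 2 ^ d * (k + 2) ^ (d - 1) := by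
  rw [card_supBall, card_supBall, show 2 * (k + 1) + 1 = 2 * k + 3 by ring]
  cases d with
  | zero => simp
  | succ e =>
    have key := abs_pow_sub_pow_le (α := ℤ) (2 * k + 3) (2 * k + 1) (e + 1)
    have h1 : |(2 * k + 3 : ℤ) - (2 * k + 1)| = 2 := by norm_num
    have h2 : max |(2 * k + 3 : ℤ)| |2 * k + 1| = 2 * k + 3 := by
      rw [abs_of_nonneg (by positivity), abs_of_nonneg (by positivity)]
      exact max_eq_left (by omega)
    rw [h1, h2, Nat.add_sub_cancel] at key
    rw [Nat.add_sub_cancel]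
    zify [Nat.pow_le_pow_left (show 2 * k + 1 ≤ 2 * k + 3 by omega) (e + 1)]
    calc ((2 * k + 3 : ℤ)) ^ (e + 1) - (2 * k + 1) ^ (e + 1)
        ≤ 2 * (e + 1) * (2 * k + 3) ^ e := by push_cast at key; exact (le_abs_self _).trans key
      _ ≤ 2 * (e + 1) * (2 * (k + 2)) ^ e := by gcongr; omega
      _ = (e + 1) * 2 ^ (e + 1) * (k + 2) ^ e := by rw [mul_pow]; ring

theorem encard_setOf_supNat_sub_eq_le (hd : 0 < d) (c : Fin d → ℤ) (m : ℕ) :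
    {x | supNat (x - c) = m}.encard ≤ (d * 2 ^ d * (m + 1) ^ (d - 1) : ℕ) := by
  cases m with
  | zero =>
    calc {x | supNat (x - c) = 0}.encard ≤ (supBall c 0 : Set (Fin d → ℤ)).encard :=
          Set.encard_le_encard fun x hx => mem_supBall.2 (le_of_eq hx)
      _ ≤ _ := by
          rw [Set.encard_coe_eq_coe_finsetCard, card_supBall]
          exact_mod_cast by simpa using Nat.mul_le_mul hd Nat.one_le_two_pow
  | succ k =>
    have hsub : supBall c k ⊆ supBall c (k + 1) := fun x hx =>
      mem_supBall.2 ((mem_supBall.1 hx).trans k.le_succ)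
    calc {x | supNat (x - c) = k + 1}.encard
        ≤ ((supBall c (k + 1) \ supBall c k : Finset _) : Set (Fin d → ℤ)).encard :=
          Set.encard_le_encard fun x hx => by
            simp only [coe_sdiff, Set.mem_sdiff, mem_coe, mem_supBall]
            exact ⟨le_of_eq hx, by simp_all⟩
      _ ≤ _ := by
          rw [Set.encard_coe_eq_coe_finsetCard, card_sdiff_of_subset hsub]
          exact_mod_cast card_supBall_succ_sub_le c k

theorem tsum_comp_supNat_sub_le (hd : 0 < d) (c : Fin d → ℤ) (h : ℕ → ℝ≥0∞) :
    ∑' x, h (supNat (x - c)) ≤ d * 2 ^ d * ∑' m : ℕ, ((m : ℝ≥0∞) + 1) ^ (d - 1) * h m := by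
  rw [← ENNReal.tsum_fiberwise _ (fun x => supNat (x - c)), ← ENNReal.tsum_mul_left]
  refine ENNReal.tsum_le_tsum fun m => ?_
  calc ∑' x : (fun x => supNat (x - c)) ⁻¹' {m}, h (supNat ((x : Fin d → ℤ) - c))
      = ∑' _ : (fun x => supNat (x - c)) ⁻¹' {m}, h m :=
        tsum_congr fun x => by rw [show supNat (x.1 - c) = m from x.2]
    _ = {x | supNat (x - c) = m}.encard * h m := ENNReal.tsum_set_const _ _
    _ ≤ ((d * 2 ^ d * (m + 1) ^ (d - 1) : ℕ) : ℕ∞) * h m := by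
        gcongr
        exact encard_setOf_supNat_sub_eq_le hd c m
    _ = d * 2 ^ d * (((m : ℝ≥0∞) + 1) ^ (d - 1) * h m) := by
        push_cast; ring

noncomputable def decay (k m : ℕ) : ℝ≥0∞ := ((m : ℝ≥0∞) + 1)⁻¹ ^ k

theorem decay_add (k l m : ℕ) : decay (k + l) m = decay k m * decay l m := pow_add _ _ _

theorem pow_mul_decay (k m : ℕ) : ((m : ℝ≥0∞) + 1) ^ k * decay k m = 1 := by
  rw [decay, ← mul_pow, ENNReal.mul_inv_cancel (by simp) (by simp), one_pow]

theorem decay_add_mul_pow (k l m : ℕ) : decay (k + l) m * ((m : ℝ≥0∞) + 1) ^ l = decay k m := by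
  rw [decay_add, mul_assoc, mul_comm (decay l m), pow_mul_decay, mul_one]

theorem decay_antitone (k : ℕ) : Antitone (decay k) := fun p q h => by
  unfold decay
  gcongr

theorem decay_le_of_le_mul {c p q : ℕ} (h : q + 1 ≤ c * (p + 1)) (k : ℕ) :
    decay k p ≤ c ^ k * decay k q := by
  have hc : c ≠ 0 := by rintro rfl; simp at h
  rw [decay, decay, ← mul_pow]
  gcongr
  rw [ENNReal.inv_le_iff_inv_le, ENNReal.mul_inv (by simp [hc]) (by simp), inv_inv, mul_comm,
    ← div_eq_mul_inv, ENNReal.div_le_iff (by simp [hc]) (by simp)]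
  exact_mod_cast h.trans_eq (mul_comm _ _)

theorem decay_eq_ofReal (k m : ℕ) : decay k m = ENNReal.ofReal (((m : ℝ) + 1)⁻¹ ^ k) := by
  rw [decay, ENNReal.ofReal_pow (by positivity), ENNReal.ofReal_inv_of_pos (by positivity),
    ENNReal.ofReal_add (by positivity) zero_le_one, ENNReal.ofReal_natCast, ENNReal.ofReal_one]

theorem tsum_pow_mul_indicator_Iic_decay_le {b : ℕ} (hb : b < d) (M : ℕ) :
    ∑' m : ℕ, ((m : ℝ≥0∞) + 1) ^ (d - 1) * (Set.Iic M).indicator (decay b) m ≤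
      ((M : ℝ≥0∞) + 1) ^ (d - b) := by
  rw [tsum_eq_sum (s := range (M + 1)) fun m hm => by
    rw [Set.indicator_of_notMem (by simpa [Nat.lt_succ_iff] using hm), mul_zero]]
  calc ∑ m ∈ range (M + 1), ((m : ℝ≥0∞) + 1) ^ (d - 1) * (Set.Iic M).indicator (decay b) m
      ≤ ∑ _m ∈ range (M + 1), ((M : ℝ≥0∞) + 1) ^ (d - 1 - b) := by
        refine sum_le_sum fun m hm => ?_
        have hmM : m ≤ M := Nat.lt_succ_iff.1 (mem_range.1 hm)
        rw [Set.indicator_of_mem (show m ∈ Set.Iic M from hmM)]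
        conv_lhs => rw [show d - 1 = d - 1 - b + b by omega, pow_add, mul_assoc, pow_mul_decay,
          mul_one]
        gcongr
    _ = ((M : ℝ≥0∞) + 1) ^ (d - b) := by
        rw [sum_const, card_range, nsmul_eq_mul, Nat.cast_add_one, ← pow_succ',
          show d - 1 - b + 1 = d - b by omega]

theorem tsum_indicator_Ici_decay_two_le (M : ℕ) :
    ∑' m : ℕ, (Set.Ici M).indicator (decay 2) m ≤ 2 * decay 1 M := by
  refine ENNReal.tsum_le_of_sum_range_le fun n => ?_
  have hreal : ∑ m ∈ Ico M n, ((m : ℝ) + 1)⁻¹ ^ 2 ≤ 2 / ((M : ℝ) + 1) := by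
    calc ∑ m ∈ Ico M n, ((m : ℝ) + 1)⁻¹ ^ 2 = ∑ i ∈ Ioo M (n + 1), ((i : ℝ) ^ 2)⁻¹ := by
          rw [← Ico_add_one_left_eq_Ioo, ← sum_Ico_add' (fun i : ℕ => ((i : ℝ) ^ 2)⁻¹)]
          simp [inv_pow]
      _ ≤ 2 / ((M : ℝ) + 1) := sum_Ioo_inv_sq_le M (n + 1)
  calc ∑ m ∈ range n, (Set.Ici M).indicator (decay 2) m = ∑ m ∈ Ico M n, decay 2 m := by
        rw [sum_indicator_eq_sum_filter]
        congr 1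
        ext m
        simp [and_comm]
    _ = ENNReal.ofReal (∑ m ∈ Ico M n, ((m : ℝ) + 1)⁻¹ ^ 2) := by
        rw [ENNReal.ofReal_sum_of_nonneg fun _ _ => by positivity]
        exact sum_congr rfl fun m _ => decay_eq_ofReal 2 m
    _ ≤ ENNReal.ofReal (2 * ((M : ℝ) + 1)⁻¹ ^ 1) := by
        rw [pow_one, ← div_eq_mul_inv]
        exact ENNReal.ofReal_le_ofReal hreal
    _ = 2 * decay 1 M := by
        rw [ENNReal.ofReal_mul zero_le_two, decay_eq_ofReal, ENNReal.ofReal_ofNat]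

theorem tsum_pow_mul_indicator_Ici_decay_le {s : ℕ} (hd : 0 < d) (hs : d < s) (M : ℕ) :
    ∑' m : ℕ, ((m : ℝ≥0∞) + 1) ^ (d - 1) * (Set.Ici M).indicator (decay s) m ≤
      2 * decay (s - d) M := by
  have hpt : ∀ m : ℕ, ((m : ℝ≥0∞) + 1) ^ (d - 1) * (Set.Ici M).indicator (decay s) m ≤
      decay (s - d - 1) M * (Set.Ici M).indicator (decay 2) m := fun m => by
    by_cases hm : m ∈ Set.Ici M
    · have hsplit : decay s m = decay (d - 1) m * (decay (s - d - 1) m * decay 2 m) := by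
        rw [← decay_add, ← decay_add]
        congr 1
        omega
      rw [Set.indicator_of_mem hm, Set.indicator_of_mem hm, hsplit, ← mul_assoc, pow_mul_decay,
        one_mul]
      gcongr
      exact decay_antitone _ hm
    · simp [hm]
  calc _ ≤ ∑' m : ℕ, decay (s - d - 1) M * (Set.Ici M).indicator (decay 2) m :=
        ENNReal.tsum_le_tsum hpt
    _ ≤ decay (s - d - 1) M * (2 * decay 1 M) := by
        rw [ENNReal.tsum_mul_left]
        gcongr
        exact tsum_indicator_Ici_decay_two_le M
    _ = 2 * decay (s - d) M := by
        rw [mul_left_comm, ← decay_add, Nat.sub_add_cancel (by omega : 1 ≤ s - d)]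

-- `p`, `q`, `n` stand for the sup-distances from `x` to `v`, from `x` to `w`, and from `v` to `w`.
theorem decay_mul_decay_le_of_triangle {a b n p q : ℕ} (hn : n ≤ p + q) (hq : q ≤ p + n) :
    decay a p * decay b q ≤
      2 ^ a * decay a n * (Set.Iic (n / 2)).indicator (decay b) q +
      2 ^ b * decay b n * (Set.Iic (n / 2)).indicator (decay a) p +
      3 ^ a * (Set.Ici (n / 2)).indicator (decay (a + b)) q := by
  by_cases hqn : q ≤ n / 2
  · rw [Set.indicator_of_mem (show q ∈ Set.Iic (n / 2) from hqn)]
    refine le_add_right (le_add_right ?_)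
    gcongr
    simpa using decay_le_of_le_mul (c := 2) (p := p) (q := n) (by omega) a
  by_cases hpn : p ≤ n / 2
  · rw [Set.indicator_of_mem (show p ∈ Set.Iic (n / 2) from hpn), mul_comm (decay a p)]
    refine le_add_right (le_add_left ?_)
    gcongr
    simpa using decay_le_of_le_mul (c := 2) (p := q) (q := n) (by omega) b
  · rw [Set.indicator_of_mem (show q ∈ Set.Ici (n / 2) by simp; omega), decay_add, ← mul_assoc]
    refine le_add_left ?_
    gcongr
    simpa using decay_le_of_le_mul (c := 3) (p := p) (q := q) (by omega) a

theorem decay_mul_tsum_indicator_Iic_decay_le {k l : ℕ} (hl : l < d) (hkl : d < k + l)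
    (c : Fin d → ℤ) (n : ℕ) :
    decay k n * ∑' x, (Set.Iic (n / 2)).indicator (decay l) (supNat (x - c)) ≤
      d * 2 ^ d * decay (k + l - d) n := by
  calc decay k n * ∑' x, (Set.Iic (n / 2)).indicator (decay l) (supNat (x - c))
      ≤ decay k n * (d * 2 ^ d * ((n : ℝ≥0∞) + 1) ^ (d - l)) := by
        refine mul_le_mul_right ((tsum_comp_supNat_sub_le (by omega) c _).trans ?_) _
        gcongr
        refine (tsum_pow_mul_indicator_Iic_decay_le hl _).trans ?_
        gcongr
        exact_mod_cast Nat.div_le_self n 2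
    _ = d * 2 ^ d * decay (k + l - d) n := by
        rw [← decay_add_mul_pow (k + l - d) (d - l), show k + l - d + (d - l) = k by omega]
        ring

theorem tsum_indicator_Ici_decay_le {s : ℕ} (hd : 0 < d) (hs : d < s) (c : Fin d → ℤ) (n : ℕ) :
    ∑' x, (Set.Ici (n / 2)).indicator (decay s) (supNat (x - c)) ≤
      d * 2 ^ d * (2 * (2 ^ (s - d) * decay (s - d) n)) := by
  refine (tsum_comp_supNat_sub_le hd c _).trans ?_
  gcongr
  refine (tsum_pow_mul_indicator_Ici_decay_le hd hs _).trans ?_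
  gcongr
  simpa using decay_le_of_le_mul (c := 2) (p := n / 2) (q := n) (by omega) (s - d)

theorem exists_tsum_decay_mul_decay_le {a b : ℕ} (ha : a < d) (hb : b < d) (hab : d < a + b) :
    ∃ C : ℕ, 0 < C ∧ ∀ v w : Fin d → ℤ,
      ∑' x, decay a (supNat (v - x)) * decay b (supNat (x - w)) ≤
        C * decay (a + b - d) (supNat (v - w)) := by
  have hd : 0 < d := by omega
  refine ⟨d * 2 ^ d * (2 ^ a + 2 ^ b + 2 * 3 ^ a * 2 ^ (a + b - d)),
    Nat.mul_pos (Nat.mul_pos hd (by positivity)) (by positivity), fun v w => ?_⟩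
  set n := supNat (v - w)
  have hsplit : ∀ x, decay a (supNat (v - x)) * decay b (supNat (x - w)) ≤
      2 ^ a * decay a n * (Set.Iic (n / 2)).indicator (decay b) (supNat (x - w)) +
      2 ^ b * decay b n * (Set.Iic (n / 2)).indicator (decay a) (supNat (x - v)) +
      3 ^ a * (Set.Ici (n / 2)).indicator (decay (a + b)) (supNat (x - w)) := fun x => by
    rw [supNat_sub_comm v x]
    refine decay_mul_decay_le_of_triangle ?_ (supNat_sub_le x v w)
    simpa only [supNat_sub_comm v x] using supNat_sub_le v x w
  have hnear_w := decay_mul_tsum_indicator_Iic_decay_le hb hab w n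
  have hnear_v := decay_mul_tsum_indicator_Iic_decay_le ha (by omega : d < b + a) v n
  rw [add_comm b a] at hnear_v
  have hfar := tsum_indicator_Ici_decay_le hd hab w n
  calc ∑' x, decay a (supNat (v - x)) * decay b (supNat (x - w))
      ≤ ∑' x, (2 ^ a * decay a n * (Set.Iic (n / 2)).indicator (decay b) (supNat (x - w)) +
          2 ^ b * decay b n * (Set.Iic (n / 2)).indicator (decay a) (supNat (x - v)) +
          3 ^ a * (Set.Ici (n / 2)).indicator (decay (a + b)) (supNat (x - w))) :=
        ENNReal.tsum_le_tsum hsplit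
    _ = 2 ^ a * (decay a n * ∑' x, (Set.Iic (n / 2)).indicator (decay b) (supNat (x - w))) +
          2 ^ b * (decay b n * ∑' x, (Set.Iic (n / 2)).indicator (decay a) (supNat (x - v))) +
          3 ^ a * ∑' x, (Set.Ici (n / 2)).indicator (decay (a + b)) (supNat (x - w)) := by
        rw [ENNReal.tsum_add, ENNReal.tsum_add, ENNReal.tsum_mul_left, ENNReal.tsum_mul_left,
          ENNReal.tsum_mul_left, mul_assoc, mul_assoc]
    _ ≤ 2 ^ a * (d * 2 ^ d * decay (a + b - d) n) + 2 ^ b * (d * 2 ^ d * decay (a + b - d) n) +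
          3 ^ a * (d * 2 ^ d * (2 * (2 ^ (a + b - d) * decay (a + b - d) n))) :=
        add_le_add
          (add_le_add (mul_le_mul_right hnear_w _) (mul_le_mul_right hnear_v _))
          (mul_le_mul_right hfar _)
    _ = _ := by
        push_cast
        ring

theorem ofReal_jap_rpow_neg_le (k : ℕ) (x : Fin d → ℤ) :
    ENNReal.ofReal (jap x ^ (-(k : ℝ))) ≤ decay k (supNat x) := by
  rw [decay_eq_ofReal, Real.rpow_neg (jap_pos x).le, Real.rpow_natCast, ← inv_pow]
  gcongr
  · exact inv_nonneg.2 (jap_pos x).le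
  · exact supNat_add_one_le_jap x

theorem decay_le_ofReal_jap_rpow_neg (hd : 0 < d) (k : ℕ) (x : Fin d → ℤ) :
    decay k (supNat x) ≤ ENNReal.ofReal (d ^ k * jap x ^ (-(k : ℝ))) := by
  rw [decay_eq_ofReal, Real.rpow_neg (jap_pos x).le, Real.rpow_natCast, ← inv_pow, ← mul_pow]
  gcongr
  rw [← div_eq_mul_inv, le_div_iff₀ (jap_pos x), inv_mul_le_iff₀ (by positivity), mul_comm]
  exact jap_le_supNat_add_one hd x

theorem summable_and_tsum_le_of_tsum_ofReal_le {ι : Type*} {f : ι → ℝ} {c : ℝ}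
    (hf : ∀ i, 0 ≤ f i) (hc : 0 ≤ c) (h : ∑' i, ENNReal.ofReal (f i) ≤ ENNReal.ofReal c) :
    Summable f ∧ ∑' i, f i ≤ c := by
  have hfin : ∑' i, ENNReal.ofReal (f i) ≠ ⊤ := ne_top_of_le_ne_top ENNReal.ofReal_ne_top h
  have hs : Summable f :=
    (ENNReal.summable_toReal hfin).congr fun i => ENNReal.toReal_ofReal (hf i)
  refine ⟨hs, ?_⟩
  rwa [← ENNReal.ofReal_tsum_of_nonneg hf hs, ENNReal.ofReal_le_ofReal_iff hc] at h

theorem exists_summable_and_tsum_jap_rpow_mul_le {a b : ℕ} (ha : a < d) (hb : b < d)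
    (hab : d < a + b) :
    ∃ C : ℝ, 0 < C ∧ ∀ v w : Fin d → ℤ,
      Summable (fun x => jap (v - x) ^ (-(a : ℝ)) * jap (x - w) ^ (-(b : ℝ))) ∧
        ∑' x, jap (v - x) ^ (-(a : ℝ)) * jap (x - w) ^ (-(b : ℝ)) ≤
          C * jap (v - w) ^ (-((a + b - d : ℕ) : ℝ)) := by
  have hd : 0 < d := by omega
  have hrpow : ∀ (y : Fin d → ℤ) (s : ℝ), 0 ≤ jap y ^ s := fun y s =>
    Real.rpow_nonneg (jap_pos y).le s
  obtain ⟨K, hK, hconv⟩ := exists_tsum_decay_mul_decay_le ha hb hab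
  refine ⟨K * d ^ (a + b - d), by positivity, fun v w => ?_⟩
  refine summable_and_tsum_le_of_tsum_ofReal_le (fun x => mul_nonneg (hrpow _ _) (hrpow _ _))
    (mul_nonneg (by positivity) (hrpow _ _)) ?_
  calc ∑' x, ENNReal.ofReal (jap (v - x) ^ (-(a : ℝ)) * jap (x - w) ^ (-(b : ℝ)))
      ≤ ∑' x, decay a (supNat (v - x)) * decay b (supNat (x - w)) :=
        ENNReal.tsum_le_tsum fun x => by
          rw [ENNReal.ofReal_mul (hrpow _ _)]
          exact mul_le_mul' (ofReal_jap_rpow_neg_le a _) (ofReal_jap_rpow_neg_le b _)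
    _ ≤ K * decay (a + b - d) (supNat (v - w)) := hconv v w
    _ ≤ K * ENNReal.ofReal (d ^ (a + b - d) * jap (v - w) ^ (-((a + b - d : ℕ) : ℝ))) := by
        gcongr
        exact decay_le_ofReal_jap_rpow_neg hd _ _
    _ = ENNReal.ofReal (K * d ^ (a + b - d) * jap (v - w) ^ (-((a + b - d : ℕ) : ℝ))) := by
        rw [mul_assoc, ENNReal.ofReal_mul (p := K) (by positivity), ENNReal.ofReal_natCast]

end

theorem stmt12 (d : ℕ) (hd : 7 ≤ d) :
    ∃ C : ℝ, 0 < C ∧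
      ∀ v w : Fin d → ℤ,
        Summable (fun x : Fin d → ℤ =>
            jap (v - x) ^ (4 - (d : ℝ)) * jap (x - w) ^ (2 - (d : ℝ))) ∧
          (∑' x : Fin d → ℤ, jap (v - x) ^ (4 - (d : ℝ)) * jap (x - w) ^ (2 - (d : ℝ))) ≤
            C * jap (v - w) ^ (6 - (d : ℝ)) := by
  have h4 : 4 - (d : ℝ) = -((d - 4 : ℕ) : ℝ) := by push_cast [show 4 ≤ d by omega]; ring
  have h2 : 2 - (d : ℝ) = -((d - 2 : ℕ) : ℝ) := by push_cast [show 2 ≤ d by omega]; ring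
  have h6 : 6 - (d : ℝ) = -((d - 4 + (d - 2) - d : ℕ) : ℝ) := by
    rw [show d - 4 + (d - 2) - d = d - 6 by omega]
    push_cast [show 6 ≤ d by omega]
    ring
  rw [h4, h2, h6]
  exact exists_summable_and_tsum_jap_rpow_mul_le (by omega) (by omega) (by omega)
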